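/- arXiv:1906.05101 — 2 statements merged into one kernel-verified Lean document; each statement's English description precedes it below -/
import Mathlib

section
/- For every n ≡ 1 (mod 3), n ≥ 4, there exists a directed graph G on n vertices with 4(n−1)/3 arcs, unit arc costs, and vertices s, t, such that every s-t path in G is simple, every s-t path has exactly (2n−2)/3 arcs (hence identical cost), and the number of distinct s-t paths equals 2^{(n−1)/3}. Consequently, for any ε ≥ 0 the number of (universal) near shortest simple s-t paths is 2^{(n−1)/3}, exponential in n. -/
/-- A walk from `s` to `t` in a digraph with arc set `A`, given as the list of
visited vertices. -/
def IsWalk {n : ℕ} (A : Finset (Fin n × Fin n)) (s t : Fin n) (p : List (Fin n)) : Prop :=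
  p.Chain' (fun u v => (u, v) ∈ A) ∧ p.head? = some s ∧ p.getLast? = some t

/-- The arc relation on natural-number labels. -/
def stepN (u v : ℕ) : Prop :=
  (u % 3 = 0 ∧ (v = u + 1 ∨ v = u + 2)) ∨ (u % 3 = 1 ∧ v = u + 2) ∨ (u % 3 = 2 ∧ v = u + 1)

instance : DecidableRel stepN := fun u v => by unfold stepN; infer_instance

/-- The vertex list of the walk determined by a list of choices, starting at `3*i`. -/
def vertsN : ℕ → List Bool → List ℕ
  | i, [] => [3 * i]
  | i, b :: c => 3 * i :: (3 * i + (if b then 1 else 2)) :: vertsN (i + 1) c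

lemma vertsN_length (i : ℕ) (c : List Bool) : (vertsN i c).length = 2 * c.length + 1 := by
  induction c generalizing i with
  | nil => simp [vertsN]
  | cons b c ih => simp [vertsN, ih]; omega

lemma vertsN_head? (i : ℕ) (c : List Bool) : (vertsN i c).head? = some (3 * i) := by
  cases c <;> simp [vertsN]

lemma vertsN_getLast? (i : ℕ) (c : List Bool) :
    (vertsN i c).getLast? = some (3 * (i + c.length)) := by
  induction c generalizing i with
  | nil => simp [vertsN]
  | cons b c ih =>
      have h := ih (i + 1)
      cases c with
      | nil => simp_all [vertsN]
      | cons b' c' =>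
          simp only [vertsN, List.getLast?_cons_cons] at h ⊢
          rw [h]; congr 2; simp only [List.length_cons]; omega

lemma vertsN_chain' (i : ℕ) (c : List Bool) : (vertsN i c).Chain' stepN := by
  induction c generalizing i with
  | nil => simp [vertsN]; exact List.isChain_singleton _
  | cons b c ih =>
      have hh := vertsN_head? (i + 1) c
      simp only [vertsN, List.Chain', List.isChain_cons_cons]
      refine ⟨?_, ?_⟩
      · cases b <;> simp [stepN] <;> omega
      · rw [List.isChain_cons]
        refine ⟨?_, ih (i + 1)⟩
        intro y hy
        rw [hh] at hy
        cases hy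
        cases b <;> simp [stepN] <;> omega

lemma vertsN_lt (i : ℕ) (c : List Bool) : (vertsN i c).Chain' (· < ·) := by
  induction c generalizing i with
  | nil => simp [vertsN]; exact List.isChain_singleton _
  | cons b c ih =>
      have hh := vertsN_head? (i + 1) c
      simp only [vertsN, List.Chain', List.isChain_cons_cons]
      refine ⟨by cases b <;> simp <;> omega, ?_⟩
      rw [List.isChain_cons]
      refine ⟨?_, ih (i + 1)⟩
      intro y hy
      rw [hh] at hy
      cases hy
      cases b <;> simp <;> omega

lemma vertsN_bound (i : ℕ) (c : List Bool) : ∀ x ∈ vertsN i c, x ≤ 3 * (i + c.length) := by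
  induction c generalizing i with
  | nil => simp [vertsN]
  | cons b c ih =>
      intro x hx
      simp only [vertsN, List.mem_cons] at hx
      rcases hx with rfl | rfl | hx
      · omega
      · cases b <;> simp <;> omega
      · have := ih (i + 1) x hx
        simp only [List.length_cons]
        omega

lemma vertsN_inj (c c' : List Bool) (i : ℕ) (h : vertsN i c = vertsN i c') : c = c' := by
  induction c generalizing c' i with
  | nil =>
      cases c' with
      | nil => rfl
      | cons b' d' => simp [vertsN] at h
  | cons b d ih =>
      cases c' with
      | nil => simp [vertsN] at h
      | cons b' d' =>
          simp only [vertsN, List.cons.injEq] at h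
          obtain ⟨-, hb, hd⟩ := h
          have : b = b' := by cases b <;> cases b' <;> simp_all
          rw [this, ih d' (i + 1) hd]

/-- Characterization: every walk from `3*i` to `3*k` staying below `3*k+1` is `vertsN i c`. -/
lemma walk_char (k : ℕ) : ∀ m (q : List ℕ), q.length ≤ m → ∀ i, i ≤ k →
    q.Chain' stepN → (∀ x ∈ q, x < 3 * k + 1) →
    q.head? = some (3 * i) → q.getLast? = some (3 * k) →
    ∃ c : List Bool, c.length = k - i ∧ q = vertsN i c := by
  intro m
  induction m using Nat.strong_induction_on with
  | _ m IH =>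
  intro q hlen i hik hchain hbdd hhead hlast
  cases q with
  | nil => simp at hhead
  | cons a rest =>
  simp only [List.head?_cons, Option.some.injEq] at hhead
  subst hhead
  cases rest with
  | nil =>
      have : 3 * i = 3 * k := by simpa using hlast
      have hik' : i = k := by omega
      exact ⟨[], by simp only [List.length_nil]; omega, by simp [vertsN, hik']⟩
  | cons b rest1 =>
      simp only [List.Chain', List.isChain_cons_cons] at hchain
      obtain ⟨hab, hchain⟩ := hchain
      have hb : b < 3 * k + 1 := hbdd b (by simp)
      have hbval : b = 3 * i + 1 ∨ b = 3 * i + 2 := by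
        rcases hab with ⟨-, h⟩ | ⟨h, -⟩ | ⟨h, -⟩ <;> omega
      have hik2 : i < k := by omega
      cases rest1 with
      | nil =>
          have : b = 3 * k := by simpa using hlast
          omega
      | cons d rest2 =>
          rw [List.isChain_cons_cons] at hchain
          obtain ⟨hbd, hchain⟩ := hchain
          have hd : d = 3 * (i + 1) := by
            rcases hbd with ⟨h, h'⟩ | ⟨h, h'⟩ | ⟨h, h'⟩ <;> omega
          subst hd
          have hlast' : (3 * (i + 1) :: rest2).getLast? = some (3 * k) := by
            rw [← hlast]; simp [List.getLast?_cons_cons]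
          obtain ⟨c', hc'len, hc'⟩ := IH (m - 1) (by
              have := hlen; simp at this ⊢; omega)
            (3 * (i + 1) :: rest2) (by simp at hlen ⊢; omega) (i + 1) (by omega)
            hchain (fun x hx => hbdd x (by simp at hx ⊢; tauto))
            (by simp) hlast'
          refine ⟨(if b = 3 * i + 1 then true else false) :: c', by simp; omega, ?_⟩
          simp only [vertsN, hc']
          congr 2
          rcases hbval with rfl | rfl <;> simp

/-- for n ≡ 1 (mod 3), n ≥ 4, there is a digraph on n vertices with
4(n−1)/3 arcs in which every s-t path is simple, has exactly (2n−2)/3 arcs, and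
the number of s-t paths is 2^{(n−1)/3}. -/
theorem stmt_3 (n : ℕ) (h4 : 4 ≤ n) (hmod : n % 3 = 1) :
    ∃ (A : Finset (Fin n × Fin n)) (s t : Fin n),
      A.card = 4 * (n - 1) / 3 ∧
      (∀ p : List (Fin n), IsWalk A s t p → p.Nodup) ∧
      (∀ p : List (Fin n), IsWalk A s t p → p.length = (2 * n - 2) / 3 + 1) ∧
      Nat.card {p : List (Fin n) // IsWalk A s t p} = 2 ^ ((n - 1) / 3) := by
  set k := (n - 1) / 3 with hk
  have hn : n = 3 * k + 1 := by omega
  have hk1 : 1 ≤ k := by omega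
  refine ⟨Finset.univ.filter (fun e : Fin n × Fin n => stepN e.1.val e.2.val),
    ⟨0, by omega⟩, ⟨3 * k, by omega⟩, ?_, ?_⟩
  · -- cardinality of the arc set
    set A := Finset.univ.filter (fun e : Fin n × Fin n => stepN e.1.val e.2.val) with hA
    set T : Finset (ℕ × ℕ) := (Finset.range k).biUnion
      (fun i => {(3*i, 3*i+1), (3*i, 3*i+2), (3*i+1, 3*i+3), (3*i+2, 3*i+3)}) with hT
    have hmemT : ∀ x y : ℕ, (x, y) ∈ T ↔ ∃ i < k,
        (x = 3*i ∧ y = 3*i+1) ∨ (x = 3*i ∧ y = 3*i+2) ∨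
        (x = 3*i+1 ∧ y = 3*i+3) ∨ (x = 3*i+2 ∧ y = 3*i+3) := by
      intro x y
      simp [hT, Finset.mem_biUnion, Prod.ext_iff]
    have hcard : A.card = T.card := by
      apply Finset.card_bij (fun e _ => (e.1.val, e.2.val))
      · rintro ⟨u, v⟩ he
        have he := (Finset.mem_filter.mp he).2; simp only [stepN] at he
        show ((u.val, v.val) : ℕ × ℕ) ∈ T
        rw [hmemT]
        have hu : u.val < n := u.isLt
        have hv : v.val < n := v.isLt
        refine ⟨(v.val - 1) / 3, ?_, ?_⟩ <;>
          rcases he with ⟨h, h'⟩ | ⟨h, h'⟩ | ⟨h, h'⟩ <;> omega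
      · rintro ⟨u₁, v₁⟩ h₁ ⟨u₂, v₂⟩ h₂ h
        simp only [Prod.mk.injEq] at h
        simp [Prod.ext_iff, Fin.ext_iff, h.1, h.2]
      · rintro ⟨x, y⟩ hb
        rw [hmemT] at hb
        obtain ⟨i, hi, hcase⟩ := hb
        have hx : x < n := by omega
        have hy : y < n := by omega
        refine ⟨(⟨x, hx⟩, ⟨y, hy⟩), ?_, rfl⟩
        refine Finset.mem_filter.mpr ⟨Finset.mem_univ _, ?_⟩; simp only [stepN]
        rcases hcase with ⟨rfl, rfl⟩ | ⟨rfl, rfl⟩ | ⟨rfl, rfl⟩ | ⟨rfl, rfl⟩ <;> omega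
    have hTcard : T.card = 4 * k := by
      rw [hT, Finset.card_biUnion]
      · have : ∀ i ∈ Finset.range k,
            ({(3*i, 3*i+1), (3*i, 3*i+2), (3*i+1, 3*i+3), (3*i+2, 3*i+3)} :
              Finset (ℕ × ℕ)).card = 4 := by
          intro i _
          rw [Finset.card_insert_of_notMem (by simp [Prod.ext_iff]),
            Finset.card_insert_of_notMem (by simp [Prod.ext_iff] <;> omega),
            Finset.card_insert_of_notMem (by simp [Prod.ext_iff] <;> omega),
            Finset.card_singleton]
        rw [Finset.sum_congr rfl this]
        simp [mul_comm]
      · intro i _ j _ hij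
        rw [Function.onFun, Finset.disjoint_left]
        rintro ⟨x, y⟩ hx hy
        simp only [Finset.mem_insert, Finset.mem_singleton, Prod.mk.injEq] at hx hy
        omega
    rw [hcard, hTcard]; omega
  · -- walk properties
    set A := Finset.univ.filter (fun e : Fin n × Fin n => stepN e.1.val e.2.val) with hA
    set s : Fin n := ⟨0, by omega⟩ with hs
    set t : Fin n := ⟨3 * k, by omega⟩ with ht
    have hwalk_iff : ∀ p : List (Fin n), IsWalk A s t p ↔
        ((p.map Fin.val).Chain' stepN ∧ (p.map Fin.val).head? = some 0 ∧
          (p.map Fin.val).getLast? = some (3 * k)) := by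
      intro p
      unfold IsWalk
      simp only [List.Chain']; rw [List.isChain_map, List.head?_map, List.getLast?_map]
      have : ∀ u v : Fin n, ((u, v) ∈ A) ↔ stepN u.val v.val := by
        intro u v; simp [hA]
      simp only [this, Option.map_eq_some_iff]
      constructor
      · rintro ⟨h1, h2, h3⟩
        exact ⟨h1, ⟨s, h2, rfl⟩, ⟨t, h3, rfl⟩⟩
      · rintro ⟨h1, ⟨a, ha, ha'⟩, ⟨b, hb, hb'⟩⟩
        have : a = s := Fin.ext ha'
        have hbt : b = t := Fin.ext hb'
        exact ⟨h1, this ▸ ha, hbt ▸ hb⟩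
    -- characterization of walks
    have hchar : ∀ p : List (Fin n), IsWalk A s t p →
        ∃ c : List Bool, c.length = k ∧ p.map Fin.val = vertsN 0 c := by
      intro p hp
      rw [hwalk_iff] at hp
      obtain ⟨h1, h2, h3⟩ := hp
      obtain ⟨c, hclen, hc⟩ := walk_char k (p.map Fin.val).length (p.map Fin.val) le_rfl 0
        (by omega) h1 (by
          intro x hx
          simp only [List.mem_map] at hx
          obtain ⟨a, -, rfl⟩ := hx
          omega)
        (by simpa using h2) h3
      exact ⟨c, by omega, hc⟩
    refine ⟨?_, ?_, ?_⟩
    · -- Nodup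
      intro p hp
      obtain ⟨c, hclen, hc⟩ := hchar p hp
      have : (p.map Fin.val).Nodup := by
        rw [hc]
        have := vertsN_lt 0 c
        simp only [List.Chain'] at this; rw [List.isChain_iff_pairwise] at this
        exact this.imp (fun h => Nat.ne_of_lt h)
      exact this.of_map _
    · -- length
      intro p hp
      obtain ⟨c, hclen, hc⟩ := hchar p hp
      have := vertsN_length 0 c
      rw [← hc, List.length_map] at this
      omega
    · -- count
      have hbdd : ∀ (c : List Bool), c.length = k → ∀ x ∈ vertsN 0 c, x < n := by
        intro c hclen x hx
        have := vertsN_bound 0 c x hx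
        omega
      -- the encoding map
      have key : Nat.card {p : List (Fin n) // IsWalk A s t p} = 2 ^ k := by
        have e1 : {c : List Bool // c.length = k} ≃ {p : List (Fin n) // IsWalk A s t p} := by
          refine Equiv.ofBijective (fun c =>
            ⟨(vertsN 0 c.1).pmap (fun m h => (⟨m, h⟩ : Fin n)) (hbdd c.1 c.2), ?_⟩) ⟨?_, ?_⟩
          · rw [hwalk_iff]
            have hmapval : ((vertsN 0 c.1).pmap (fun m h => (⟨m, h⟩ : Fin n))
                (hbdd c.1 c.2)).map Fin.val = vertsN 0 c.1 := by
              rw [List.map_pmap]; simp [List.pmap_eq_map]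
            rw [hmapval]
            refine ⟨vertsN_chain' 0 c.1, by simpa using vertsN_head? 0 c.1, ?_⟩
            have := vertsN_getLast? 0 c.1
            rw [this, c.2]; norm_num
          · rintro ⟨c1, h1⟩ ⟨c2, h2⟩ h
            simp only [Subtype.mk.injEq] at h ⊢
            have : vertsN 0 c1 = vertsN 0 c2 := by
              have e1 : ((vertsN 0 c1).pmap (fun m h => (⟨m, h⟩ : Fin n))
                  (hbdd c1 h1)).map Fin.val = vertsN 0 c1 := by
                rw [List.map_pmap]; simp [List.pmap_eq_map]
              have e2 : ((vertsN 0 c2).pmap (fun m h => (⟨m, h⟩ : Fin n))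
                  (hbdd c2 h2)).map Fin.val = vertsN 0 c2 := by
                rw [List.map_pmap]; simp [List.pmap_eq_map]
              rw [← e1, ← e2, h]
            exact vertsN_inj c1 c2 0 this
          · rintro ⟨p, hp⟩
            obtain ⟨c, hclen, hc⟩ := hchar p hp
            refine ⟨⟨c, hclen⟩, ?_⟩
            simp only [Subtype.mk.injEq]
            apply List.map_injective_iff.mpr Fin.val_injective
            rw [List.map_pmap]; simp [List.pmap_eq_map, hc]
        rw [← Nat.card_congr e1]
        have e2 : {c : List Bool // c.length = k} ≃ (Fin k → Bool) :=
          Equiv.vectorEquivFin Bool k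
        rw [Nat.card_congr e2]
        simp [Nat.card_eq_fintype_card]
      rw [key]
end

section
/- In the directed graph on vertices v_1,…,v_n (n ≥ 2) with parallel arc pairs between consecutive vertices, where both arcs from v_1 to v_2 have cost 1, and for i = 2,…,n−1 the two arcs from v_i to v_{i+1} have costs 0 and 2^{i−2} respectively: (a) every v_1-v_n path has cost in the set {1, 2, …, 2^{n−2}}; (b) for every integer z with 1 ≤ z ≤ 2^{n−2} there exist exactly two distinct v_1-v_n paths of cost z; (c) the total number of v_1-v_n paths is 2^{n−1}; hence the number of distinct path-cost values is 2^{n−2}, exponential in n. -/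
/-! Choosing the expensive arcs at positions 1, …, n−2 writes the cost minus one in binary;
the free choice at position 0 doubles every fibre. -/

/-- A v₁-vₙ path in the parallel-arc chain graph is determined by the boolean
choice of arc at each of the n−1 positions; `pcost` is its total cost:
position 0 (the arcs v₁→v₂) always costs 1, and position i ≥ 1 (arcs
v_{i+1}→v_{i+2}) costs 0 or 2^{i−1}. -/
def pcost (n : ℕ) (f : Fin (n - 1) → Bool) : ℕ :=
  1 + ∑ i : Fin (n - 1), if 1 ≤ i.val ∧ f i then 2 ^ (i.val - 1) else 0

def binaryValue {k : ℕ} (g : Fin k → Bool) : ℕ :=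
  ∑ j : Fin k, if g j then 2 ^ (j : ℕ) else 0

def binaryValueEquiv (k : ℕ) : (Fin k → Bool) ≃ Fin (2 ^ k) :=
  (Equiv.arrowCongr (Equiv.refl _) finTwoEquiv.symm).trans finFunctionFinEquiv

theorem binaryValueEquiv_val {k : ℕ} (g : Fin k → Bool) :
    (binaryValueEquiv k g : ℕ) = binaryValue g := by
  simp only [binaryValueEquiv, binaryValue, Equiv.trans_apply, finFunctionFinEquiv_apply]
  refine Finset.sum_congr rfl fun j _ => ?_
  cases h : g j <;> simp [h, finTwoEquiv]

theorem binaryValue_lt {k : ℕ} (g : Fin k → Bool) : binaryValue g < 2 ^ k :=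
  binaryValueEquiv_val g ▸ (binaryValueEquiv k g).isLt

theorem pcost_eq_one_add_binaryValue {k : ℕ} (f : Fin (k + 1) → Bool) :
    pcost (k + 2) f = 1 + binaryValue (Fin.tail f) := by
  simp [pcost, binaryValue, Fin.sum_univ_succ (n := k), Fin.tail]
  rfl

theorem pcost_eq_iff {k : ℕ} (f : Fin (k + 1) → Bool) (x : Fin (2 ^ k)) :
    pcost (k + 2) f = x + 1 ↔ Fin.tail f = (binaryValueEquiv k).symm x := by
  rw [Equiv.eq_symm_apply, Fin.ext_iff, binaryValueEquiv_val, pcost_eq_one_add_binaryValue]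
  omega

def tailFiberEquiv {k : ℕ} {α : Type*} (g : Fin k → α) :
    {f : Fin (k + 1) → α // Fin.tail f = g} ≃ α where
  toFun f := f.1 0
  invFun a := ⟨Fin.cons a g, Fin.tail_cons (α := fun _ => α) a g⟩
  left_inv := by
    rintro ⟨f, rfl⟩
    exact Subtype.ext (Fin.cons_self_tail f)
  right_inv a := Fin.cons_zero (α := fun _ => α) a g

theorem card_pcost_eq_succ {k : ℕ} (x : Fin (2 ^ k)) :
    Nat.card {f : Fin (k + 1) → Bool // pcost (k + 2) f = x + 1} = 2 := by
  rw [Nat.card_congr ((Equiv.subtypeEquivRight (pcost_eq_iff · x)).trans (tailFiberEquiv _)),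
    Nat.card_eq_fintype_card, Fintype.card_bool]

theorem pcost_mem_Icc {k : ℕ} (f : Fin (k + 1) → Bool) :
    1 ≤ pcost (k + 2) f ∧ pcost (k + 2) f ≤ 2 ^ k := by
  have := binaryValue_lt (Fin.tail f)
  rw [pcost_eq_one_add_binaryValue]
  omega

theorem card_pcost_eq {k z : ℕ} (hz₁ : 1 ≤ z) (hz₂ : z ≤ 2 ^ k) :
    Nat.card {f : Fin (k + 1) → Bool // pcost (k + 2) f = z} = 2 := by
  obtain ⟨x, rfl⟩ : ∃ x : Fin (2 ^ k), z = x + 1 := ⟨⟨z - 1, by omega⟩, by simp; omega⟩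
  exact card_pcost_eq_succ x

theorem image_pcost (k : ℕ) : Finset.univ.image (pcost (k + 2)) = Finset.Icc 1 (2 ^ k) := by
  ext z
  simp only [Finset.mem_image, Finset.mem_univ, true_and, Finset.mem_Icc]
  refine ⟨fun ⟨f, hf⟩ => hf ▸ pcost_mem_Icc f, fun ⟨hz₁, hz₂⟩ => ?_⟩
  obtain ⟨f, hf⟩ := (Nat.card_pos_iff.1 (card_pcost_eq hz₁ hz₂ ▸ two_pos)).1
  exact ⟨f, hf⟩

/-- (a) every path cost lies in {1,…,2^{n−2}}; (b) each such value is
attained by exactly two paths; (c) there are 2^{n−1} paths; the number of distinct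
cost values is 2^{n−2}. -/
theorem stmt_4 (n : ℕ) (hn : 2 ≤ n) :
    (∀ f : Fin (n - 1) → Bool, 1 ≤ pcost n f ∧ pcost n f ≤ 2 ^ (n - 2)) ∧
    (∀ z : ℕ, 1 ≤ z → z ≤ 2 ^ (n - 2) →
      Nat.card {f : Fin (n - 1) → Bool // pcost n f = z} = 2) ∧
    Nat.card (Fin (n - 1) → Bool) = 2 ^ (n - 1) ∧
    (Finset.univ.image (pcost n)).card = 2 ^ (n - 2) := by
  obtain ⟨k, rfl⟩ : ∃ k, n = k + 2 := ⟨n - 2, by omega⟩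
  simp only [Nat.add_sub_cancel, Nat.add_succ_sub_one]
  refine ⟨pcost_mem_Icc, fun _ => card_pcost_eq, by simp [Nat.card_eq_fintype_card], ?_⟩
  rw [image_pcost, Nat.card_Icc, Nat.add_sub_cancel]
end
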